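/- arXiv:2112.13339 — 7 statements merged into one kernel-verified Lean document; each statement's English description precedes it below -/
import Mathlib

section
/- Let d ≥ 1, R > 0, and let μ be a Borel probability measure on ℝ^d whose support is contained in the closed ball of radius R centered at the origin. Fix ν ∈ (0,1) and set a = √(1−ν). For x ∈ ℝ^d define the Gaussian weight G(y) = exp(−‖x − a·y‖²/(2ν)) and the integrated score s(x) = (∫ −((x − a·y)/ν)·G(y) dμ(y)) / (∫ G(y) dμ(y)) (the denominator is strictly positive since G > 0 and μ is a probability measure). Then for every point x₀ in the support of μ and every x ∈ ℝ^d, ‖s(x) − (−(x − a·x₀)/ν)‖ ≤ 2R·√(1−ν)/ν. -/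
open MeasureTheory Metric

/-!
The integrated score is an average of the conditional scores `-(x - a • y) / ν` against the
probability weights `G y dμ(y) / ∫ G dμ`. Two conditional scores at `y` and `x₀` differ by
`(a / ν) • (y - x₀)`, of norm at most `2 R a / ν` for `μ`-almost every `y`, since `μ` is carried
by its support inside the ball of radius `R`; an average of vectors within `C` of a point stays
within `C` of it.
-/

/-- The (topological) support of a measure: the set of points all of whose
neighborhoods have nonzero measure. -/
def measureSupport {E : Type*} [TopologicalSpace E] [MeasurableSpace E]
    (μ : Measure E) : Set E :=
  {x | ∀ U ∈ nhds x, μ U ≠ 0}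

section Support

variable {X : Type*} [TopologicalSpace X] [MeasurableSpace X]

theorem measureSupport_eq_support (μ : Measure X) : measureSupport μ = μ.support := by
  ext x
  rw [Measure.mem_support_iff_forall]
  exact forall₂_congr fun U _ => pos_iff_ne_zero.symm

theorem measureSupport_mem_ae [HereditarilyLindelofSpace X] (μ : Measure X) :
    measureSupport μ ∈ ae μ :=
  measureSupport_eq_support μ ▸ Measure.support_mem_ae

end Support

theorem norm_inv_integral_smul_integral_smul_sub_le {α E : Type*} [MeasurableSpace α]
    [NormedAddCommGroup E] [NormedSpace ℝ E] [CompleteSpace E] {μ : Measure α}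
    {w : α → ℝ} {f : α → E} {v : E} {C : ℝ}
    (hw : 0 ≤ᵐ[μ] w) (hw_int : Integrable w μ) (hw_pos : 0 < ∫ y, w y ∂μ)
    (hf : AEStronglyMeasurable f μ) (hfv : ∀ᵐ y ∂μ, ‖f y - v‖ ≤ C) :
    ‖(∫ y, w y ∂μ)⁻¹ • (∫ y, w y • f y ∂μ) - v‖ ≤ C := by
  have hdev_bound : ∀ᵐ y ∂μ, ‖w y • (f y - v)‖ ≤ C * w y := by
    filter_upwards [hw, hfv] with y hwy hy
    rw [norm_smul, Real.norm_of_nonneg hwy, mul_comm]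
    exact mul_le_mul_of_nonneg_right hy hwy
  have hdev_int : Integrable (fun y => w y • (f y - v)) μ :=
    (hw_int.const_mul C).mono'
      (hw_int.aestronglyMeasurable.smul (hf.sub aestronglyMeasurable_const)) hdev_bound
  have hwv_int : Integrable (fun y => w y • v) μ := hw_int.smul_const v
  have hwf_int : Integrable (fun y => w y • f y) μ := by
    refine (hdev_int.add hwv_int).congr (Filter.Eventually.of_forall fun y => ?_)
    simp only [Pi.add_apply, ← smul_add, sub_add_cancel]
  have hdev_eq : (∫ y, w y ∂μ)⁻¹ • (∫ y, w y • f y ∂μ) - v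
      = (∫ y, w y ∂μ)⁻¹ • ∫ y, w y • (f y - v) ∂μ := by
    simp only [smul_sub]
    rw [integral_sub hwf_int hwv_int, integral_smul_const, smul_sub, smul_smul,
      inv_mul_cancel₀ hw_pos.ne', one_smul]
  have hdev_norm : ‖∫ y, w y • (f y - v) ∂μ‖ ≤ C * ∫ y, w y ∂μ := by
    calc ‖∫ y, w y • (f y - v) ∂μ‖ ≤ ∫ y, C * w y ∂μ :=
          norm_integral_le_of_norm_le (hw_int.const_mul C) hdev_bound
      _ = C * ∫ y, w y ∂μ := integral_const_mul C _
  rw [hdev_eq, norm_smul, Real.norm_of_nonneg (inv_nonneg.2 hw_pos.le)]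
  calc (∫ y, w y ∂μ)⁻¹ * ‖∫ y, w y • (f y - v) ∂μ‖ ≤ (∫ y, w y ∂μ)⁻¹ * (C * ∫ y, w y ∂μ) :=
        mul_le_mul_of_nonneg_left hdev_norm (inv_nonneg.2 hw_pos.le)
    _ = C := by field_simp

theorem norm_neg_smul_sub_sub_neg_smul_sub {E : Type*} [NormedAddCommGroup E] [NormedSpace ℝ E]
    {ν a : ℝ} (hν : 0 < ν) (ha : 0 ≤ a) (x y z : E) :
    ‖-(ν⁻¹ • (x - a • y)) - -(ν⁻¹ • (x - a • z))‖ = ‖y - z‖ * a / ν := by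
  have : -(ν⁻¹ • (x - a • y)) - -(ν⁻¹ • (x - a • z)) = (a / ν) • (y - z) := by
    simp only [div_eq_mul_inv]
    module
  rw [this, norm_smul, Real.norm_of_nonneg (by positivity), mul_comm, mul_div_assoc]

theorem single_point_score_bound_general
    (d : ℕ) (R : ℝ)
    (μ : Measure (EuclideanSpace ℝ (Fin d))) [IsProbabilityMeasure μ]
    (hsupp : measureSupport μ ⊆ closedBall (0 : EuclideanSpace ℝ (Fin d)) R)
    (ν : ℝ) (hν : ν ∈ Set.Ioo (0 : ℝ) 1)
    (x₀ : EuclideanSpace ℝ (Fin d)) (hx₀ : x₀ ∈ measureSupport μ)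
    (x : EuclideanSpace ℝ (Fin d))
    (a : ℝ) (ha : a = Real.sqrt (1 - ν))
    (G : EuclideanSpace ℝ (Fin d) → ℝ)
    (hG : G = fun y => Real.exp (-‖x - a • y‖ ^ 2 / (2 * ν)))
    (s : EuclideanSpace ℝ (Fin d))
    (hs : s = (∫ y, G y ∂μ)⁻¹ • ∫ y, G y • (-(ν⁻¹ • (x - a • y))) ∂μ) :
    ‖s - (-(ν⁻¹ • (x - a • x₀)))‖ ≤ 2 * R * Real.sqrt (1 - ν) / ν := by
  have hν0 : 0 < ν := hν.1
  have hG_int : Integrable G μ := by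
    refine Integrable.of_bound (by rw [hG]; fun_prop) 1 (Filter.Eventually.of_forall fun y => ?_)
    rw [hG, Real.norm_of_nonneg (Real.exp_nonneg _), Real.exp_le_one_iff]
    exact div_nonpos_of_nonpos_of_nonneg (neg_nonpos.2 (by positivity)) (by positivity)
  have hG_pos : 0 < ∫ y, G y ∂μ := by
    subst hG
    exact integral_exp_pos hG_int
  have hx₀R : ‖x₀‖ ≤ R := mem_closedBall_zero_iff.1 (hsupp hx₀)
  have hscore_dev : ∀ᵐ y ∂μ, ‖-(ν⁻¹ • (x - a • y)) - -(ν⁻¹ • (x - a • x₀))‖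
      ≤ 2 * R * Real.sqrt (1 - ν) / ν := by
    filter_upwards [measureSupport_mem_ae μ] with y hy
    have hyR : ‖y‖ ≤ R := mem_closedBall_zero_iff.1 (hsupp hy)
    rw [norm_neg_smul_sub_sub_neg_smul_sub hν0 (ha ▸ Real.sqrt_nonneg _), ha]
    gcongr
    linarith [norm_sub_le y x₀]
  rw [hs]
  exact norm_inv_integral_smul_integral_smul_sub_le
    (Filter.Eventually.of_forall fun y => by rw [hG]; exact (Real.exp_pos _).le)
    hG_int hG_pos (by fun_prop) hscore_dev

theorem single_point_score_bound
    (d : ℕ) (hd : 1 ≤ d) (R : ℝ) (hR : 0 < R)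
    (μ : Measure (EuclideanSpace ℝ (Fin d))) [IsProbabilityMeasure μ]
    (hsupp : measureSupport μ ⊆ closedBall (0 : EuclideanSpace ℝ (Fin d)) R)
    (ν : ℝ) (hν : ν ∈ Set.Ioo (0 : ℝ) 1)
    (x₀ : EuclideanSpace ℝ (Fin d)) (hx₀ : x₀ ∈ measureSupport μ)
    (x : EuclideanSpace ℝ (Fin d))
    (a : ℝ) (ha : a = Real.sqrt (1 - ν))
    (G : EuclideanSpace ℝ (Fin d) → ℝ)
    (hG : G = fun y => Real.exp (-‖x - a • y‖ ^ 2 / (2 * ν)))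
    (s : EuclideanSpace ℝ (Fin d))
    (hs : s = (∫ y, G y ∂μ)⁻¹ • ∫ y, G y • (-(ν⁻¹ • (x - a • y))) ∂μ) :
    ‖s - (-(ν⁻¹ • (x - a • x₀)))‖ ≤ 2 * R * Real.sqrt (1 - ν) / ν :=
  single_point_score_bound_general d R μ hsupp ν hν x₀ hx₀ x a ha G hG s hs
end

section
/- Let x and y be vectors in a real inner product space, and let r ∈ [0,1]. If ‖x − y‖ ≤ r·‖x‖, then ⟪x, y⟫ ≥ (1 − (1/2)·(1 + r)·r²)·‖x‖·‖y‖; in particular, when x and y are nonzero, the cosine similarity ⟪x, y⟫/(‖x‖·‖y‖) is at least 1 − (1/2)·(1 + r)·r². -/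
/-!
By the polarization identity and `(c a - b)² ≥ 0`, `‖x - y‖² ≤ (1 - c²)‖x‖²` gives
`2⟪x, y⟫ = ‖x‖² + ‖y‖² - ‖x - y‖² ≥ c²‖x‖² + ‖y‖² ≥ 2 c ‖x‖‖y‖`. With `c = 1 - (1 + r) r² / 2`
the hypothesis `‖x - y‖² ≤ r²‖x‖²` suffices because `1 - r² - c² = r³ (4 - r (1 + r)²) / 4 ≥ 0`
for `r ∈ [0, 1]`.
-/

open scoped RealInnerProductSpace

theorem mul_norm_mul_norm_le_real_inner_of_norm_sub_sq_le
    {E : Type*} [NormedAddCommGroup E] [InnerProductSpace ℝ E] {x y : E} {c : ℝ}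
    (h : ‖x - y‖ ^ 2 ≤ (1 - c ^ 2) * ‖x‖ ^ 2) :
    c * (‖x‖ * ‖y‖) ≤ ⟪x, y⟫ := by
  have hpol := norm_sub_sq_real x y
  nlinarith [sq_nonneg (c * ‖x‖ - ‖y‖)]

theorem sq_one_sub_half_mul_one_add_mul_sq_le {r : ℝ} (hr₀ : 0 ≤ r) (hr₁ : r ≤ 1) :
    (1 - (1 / 2) * (1 + r) * r ^ 2) ^ 2 ≤ 1 - r ^ 2 := by
  have hcube : 0 ≤ r ^ 3 := pow_nonneg hr₀ 3
  have hfactor : r * (1 + r) ^ 2 ≤ 4 := by nlinarith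
  nlinarith [mul_nonneg hcube (sub_nonneg.2 hfactor)]

theorem cosine_similarity_lower_bound
    {E : Type*} [NormedAddCommGroup E] [InnerProductSpace ℝ E]
    (x y : E) (r : ℝ) (hr : r ∈ Set.Icc (0 : ℝ) 1)
    (h : ‖x - y‖ ≤ r * ‖x‖) :
    (1 - (1 / 2) * (1 + r) * r ^ 2) * (‖x‖ * ‖y‖) ≤ ⟪x, y⟫ ∧
      (x ≠ 0 → y ≠ 0 →
        1 - (1 / 2) * (1 + r) * r ^ 2 ≤ ⟪x, y⟫ / (‖x‖ * ‖y‖)) := by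
  obtain ⟨hr₀, hr₁⟩ := hr
  have hsq : ‖x - y‖ ^ 2 ≤ r ^ 2 * ‖x‖ ^ 2 := by
    rw [← mul_pow]
    exact pow_le_pow_left₀ (norm_nonneg _) h 2
  have hbound : (1 - (1 / 2) * (1 + r) * r ^ 2) * (‖x‖ * ‖y‖) ≤ ⟪x, y⟫ := by
    refine mul_norm_mul_norm_le_real_inner_of_norm_sub_sq_le (hsq.trans ?_)
    gcongr
    linarith [sq_one_sub_half_mul_one_add_mul_sq_le hr₀ hr₁]
  exact ⟨hbound, fun hx hy => (le_div_iff₀ (by positivity)).2 hbound⟩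
end

section
/- Let I ⊆ ℝ be an open interval, β : ℝ → ℝ twice differentiable on I, and ν : ℝ → ℝ differentiable on I with 0 < ν(t) < 1 and ν'(t) = (1 − ν(t))·β(t) for t ∈ I. Fix x₀ ∈ ℝ and define the single-point score S(x,t) = (x − √(1 − ν(t))·x₀)/√(ν(t)), the probability-flow drift f♭(x,t) = −(β(t)/2)·x + (β(t)/(2√(ν(t))))·S(x,t), and the operator (L♭ φ)(x,t) = −∂φ/∂t (x,t) − f♭(x,t)·∂φ/∂x (x,t). Then for all x ∈ ℝ and t ∈ I, (L♭(L♭(−f♭)))(x,t) = ( β(t)³/8 − 3β(t)β'(t)/4 + β''(t)/2 )·x + ( β(t)³·(−ν(t)² + 3ν(t) − 3)/(8·ν(t)^{5/2}) + 3β(t)β'(t)/(4·ν(t)^{3/2}) − β''(t)/(2√(ν(t))) )·S(x,t). -/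
/-!
Along the probability flow the score is constant: the trajectories are
`x = √(1 - ν) x₀ + √ν ε` with `ε = S` fixed, so `L♭ S = 0`, while `L♭ x = -f♭`.
Since `L♭` is a first-order operator, in the basis `(x, S)` it therefore acts on
time-dependent coefficients by `c x + d S ↦ (β c / 2 - c') x - (d' + β c / (2 √ν)) S`.
Starting from `-f♭ = (β/2) x - (β / (2 √ν)) S` and applying this rule twice gives the
coefficients of the theorem; the first application holds on all of `I`, which is what
allows differentiating its coefficients once more.
-/

open Real Filter Topology

noncomputable def flowDerivative (f φ : ℝ → ℝ → ℝ) (x t : ℝ) : ℝ :=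
  -(deriv (fun τ => φ x τ) t) - f x t * deriv (fun ξ => φ ξ t) x

theorem flowDerivative_fst (f : ℝ → ℝ → ℝ) (x t : ℝ) :
    flowDerivative f (fun ξ _ => ξ) x t = -f x t := by
  simp [flowDerivative]

theorem flowDerivative_mul_add_mul {f φ u v : ℝ → ℝ → ℝ} {c d : ℝ → ℝ} {c' d' x t : ℝ}
    (hφ : ∀ᶠ τ in 𝓝 t, ∀ ξ, φ ξ τ = c τ * u ξ τ + d τ * v ξ τ)
    (hc : HasDerivAt c c' t) (hd : HasDerivAt d d' t)
    (hut : DifferentiableAt ℝ (fun τ => u x τ) t) (hux : DifferentiableAt ℝ (fun ξ => u ξ t) x)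
    (hvt : DifferentiableAt ℝ (fun τ => v x τ) t) (hvx : DifferentiableAt ℝ (fun ξ => v ξ t) x) :
    flowDerivative f φ x t = -(c' * u x t + d' * v x t)
      + c t * flowDerivative f u x t + d t * flowDerivative f v x t := by
  have htime : deriv (fun τ => φ x τ) t = c' * u x t + c t * deriv (fun τ => u x τ) t
      + (d' * v x t + d t * deriv (fun τ => v x τ) t) := by
    have hφx : (fun τ => φ x τ) =ᶠ[𝓝 t] fun τ => c τ * u x τ + d τ * v x τ :=
      hφ.mono fun τ h => h x
    rw [hφx.deriv_eq]
    exact ((hc.mul hut.hasDerivAt).add (hd.mul hvt.hasDerivAt)).deriv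
  have hspace : deriv (fun ξ => φ ξ t) x
      = c t * deriv (fun ξ => u ξ t) x + d t * deriv (fun ξ => v ξ t) x := by
    rw [funext hφ.self_of_nhds]
    exact ((hux.hasDerivAt.const_mul (c t)).add (hvx.hasDerivAt.const_mul (d t))).deriv
  simp only [flowDerivative, htime, hspace]
  ring

noncomputable def vpScore (ν : ℝ → ℝ) (x₀ x t : ℝ) : ℝ := (x - √(1 - ν t) * x₀) / √(ν t)

noncomputable def vpDrift (β ν : ℝ → ℝ) (x₀ x t : ℝ) : ℝ :=
  -(β t / 2) * x + (β t / (2 * √(ν t))) * vpScore ν x₀ x t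

theorem hasDerivAt_vpScore_space (ν : ℝ → ℝ) (x₀ x t : ℝ) :
    HasDerivAt (fun ξ => vpScore ν x₀ ξ t) (1 / √(ν t)) x :=
  ((hasDerivAt_id x).sub_const _).div_const _

section VarianceSchedule

variable {β ν : ℝ → ℝ} {t : ℝ}

theorem hasDerivAt_sqrt_noiseLevel (hν0 : 0 < ν t) (hν : HasDerivAt ν ((1 - ν t) * β t) t) :
    HasDerivAt (fun τ => √(ν τ)) ((1 - ν t) * β t / (2 * √(ν t))) t :=
  hν.sqrt hν0.ne'

theorem hasDerivAt_sqrt_one_sub_noiseLevel (hν1 : ν t < 1)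
    (hν : HasDerivAt ν ((1 - ν t) * β t) t) :
    HasDerivAt (fun τ => √(1 - ν τ)) (-(β t * √(1 - ν t)) / 2) t := by
  have hpos : 0 < 1 - ν t := by linarith
  refine ((hν.const_sub 1).sqrt hpos.ne').congr_deriv ?_
  have hsq := sq_sqrt hpos.le
  have hne := (sqrt_pos.2 hpos).ne'
  field_simp
  linear_combination β t * hsq

theorem hasDerivAt_vpScore_time (x₀ x : ℝ) (hν0 : 0 < ν t) (hν1 : ν t < 1)
    (hν : HasDerivAt ν ((1 - ν t) * β t) t) :
    HasDerivAt (fun τ => vpScore ν x₀ x τ) (-vpDrift β ν x₀ x t / √(ν t)) t := by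
  refine ((((hasDerivAt_sqrt_one_sub_noiseLevel hν1 hν).mul_const x₀).const_sub x).div
    (hasDerivAt_sqrt_noiseLevel hν0 hν) (sqrt_pos.2 hν0).ne').congr_deriv ?_
  have hne := (sqrt_pos.2 hν0).ne'
  have hνσ := (sq_sqrt hν0.le).symm
  unfold vpDrift vpScore
  set σ := √(ν t)
  rw [hνσ]
  field_simp
  ring

theorem flowDerivative_vpScore (x₀ x : ℝ) (hν0 : 0 < ν t) (hν1 : ν t < 1)
    (hν : HasDerivAt ν ((1 - ν t) * β t) t) :
    flowDerivative (vpDrift β ν x₀) (vpScore ν x₀) x t = 0 := by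
  rw [flowDerivative, (hasDerivAt_vpScore_time x₀ x hν0 hν1 hν).deriv,
    (hasDerivAt_vpScore_space ν x₀ x t).deriv]
  ring

theorem flowDerivative_vpDrift_eq_of_eventually {φ : ℝ → ℝ → ℝ} {c d : ℝ → ℝ} {c' d' : ℝ}
    (x₀ x : ℝ) (hν0 : 0 < ν t) (hν1 : ν t < 1) (hν : HasDerivAt ν ((1 - ν t) * β t) t)
    (hφ : ∀ᶠ τ in 𝓝 t, ∀ ξ, φ ξ τ = c τ * ξ + d τ * vpScore ν x₀ ξ τ)
    (hc : HasDerivAt c c' t) (hd : HasDerivAt d d' t) :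
    flowDerivative (vpDrift β ν x₀) φ x t
      = (β t * c t / 2 - c') * x - (d' + β t * c t / (2 * √(ν t))) * vpScore ν x₀ x t := by
  rw [flowDerivative_mul_add_mul (u := fun ξ _ => ξ) hφ hc hd (differentiableAt_const x)
    differentiableAt_id (hasDerivAt_vpScore_time x₀ x hν0 hν1 hν).differentiableAt
    (hasDerivAt_vpScore_space ν x₀ x t).differentiableAt, flowDerivative_fst,
    flowDerivative_vpScore x₀ x hν0 hν1 hν, vpDrift]
  ring

theorem flowDerivative_neg_vpDrift {β' : ℝ} (x₀ x : ℝ) (hν0 : 0 < ν t) (hν1 : ν t < 1)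
    (hν : HasDerivAt ν ((1 - ν t) * β t) t) (hβ : HasDerivAt β β' t) :
    flowDerivative (vpDrift β ν x₀) (fun ξ τ => -vpDrift β ν x₀ ξ τ) x t
      = (β t ^ 2 / 4 - β' / 2) * x
        + (β' / (2 * √(ν t)) - β t ^ 2 / (4 * √(ν t) ^ 3)) * vpScore ν x₀ x t := by
  have hσ := hasDerivAt_sqrt_noiseLevel hν0 hν
  have hne := (sqrt_pos.2 hν0).ne'
  rw [flowDerivative_vpDrift_eq_of_eventually (c := fun τ => β τ / 2)
    (d := fun τ => -(β τ / (2 * √(ν τ)))) x₀ x hν0 hν1 hν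
    (Eventually.of_forall fun τ ξ => by simp only [vpDrift]; ring)
    (hβ.div_const 2) ((hβ.div (hσ.const_mul 2) (by positivity)).neg)]
  have hνσ := (sq_sqrt hν0.le).symm
  set σ := √(ν t)
  rw [hνσ]
  field_simp
  ring

end VarianceSchedule

theorem ideal_derivative_L_flat_sq_of_drift
    (I : Set ℝ) (hI : IsOpen I)
    (β ν : ℝ → ℝ)
    (hβ : ∀ t ∈ I, DifferentiableAt ℝ β t)
    (hβ' : ∀ t ∈ I, DifferentiableAt ℝ (deriv β) t)
    (hν01 : ∀ t ∈ I, 0 < ν t ∧ ν t < 1)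
    (hν : ∀ t ∈ I, HasDerivAt ν ((1 - ν t) * β t) t)
    (x₀ : ℝ)
    (S : ℝ → ℝ → ℝ)
    (hS : S = fun x t => (x - Real.sqrt (1 - ν t) * x₀) / Real.sqrt (ν t))
    (f : ℝ → ℝ → ℝ)
    (hf : f = fun x t => -(β t / 2) * x + (β t / (2 * Real.sqrt (ν t))) * S x t)
    (L : (ℝ → ℝ → ℝ) → ℝ → ℝ → ℝ)
    (hL : L = fun φ x t =>
      -(deriv (fun τ => φ x τ) t) - f x t * deriv (fun ξ => φ ξ t) x) :
    ∀ x : ℝ, ∀ t ∈ I,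
      L (L (fun x t => -f x t)) x t
        = (β t ^ 3 / 8 - 3 * β t * deriv β t / 4 + deriv (deriv β) t / 2) * x
          + (β t ^ 3 * (-(ν t ^ 2) + 3 * ν t - 3) / (8 * ν t ^ ((5 : ℝ) / 2))
              + 3 * β t * deriv β t / (4 * ν t ^ ((3 : ℝ) / 2))
              - deriv (deriv β) t / (2 * Real.sqrt (ν t))) * S x t := by
  obtain rfl : S = vpScore ν x₀ := hS
  obtain rfl : f = vpDrift β ν x₀ := hf
  obtain rfl : L = flowDerivative (vpDrift β ν x₀) := hL
  intro x t ht
  obtain ⟨hν0, hν1⟩ := hν01 t ht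
  have hsecond : ∀ᶠ τ in 𝓝 t, ∀ ξ,
      flowDerivative (vpDrift β ν x₀) (fun x t => -vpDrift β ν x₀ x t) ξ τ
        = (β τ ^ 2 / 4 - deriv β τ / 2) * ξ
          + (deriv β τ / (2 * √(ν τ)) - β τ ^ 2 / (4 * √(ν τ) ^ 3)) * vpScore ν x₀ ξ τ := by
    filter_upwards [hI.mem_nhds ht] with τ hτ ξ
    exact flowDerivative_neg_vpDrift x₀ ξ (hν01 τ hτ).1 (hν01 τ hτ).2 (hν τ hτ)
      (hβ τ hτ).hasDerivAt
  have hb := (hβ t ht).hasDerivAt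
  have hb' := (hβ' t ht).hasDerivAt
  have hσ := hasDerivAt_sqrt_noiseLevel hν0 (hν t ht)
  have hne := (sqrt_pos.2 hν0).ne'
  rw [flowDerivative_vpDrift_eq_of_eventually x₀ x hν0 hν1 (hν t ht) hsecond
    (((hb.fun_pow 2).div_const 4).sub (hb'.div_const 2))
    ((hb'.div (hσ.const_mul 2) (by positivity)).sub
      ((hb.fun_pow 2).div ((hσ.fun_pow 3).const_mul 4) (by positivity))),
    rpow_div_two_eq_sqrt _ hν0.le, rpow_div_two_eq_sqrt _ hν0.le, rpow_ofNat, rpow_ofNat]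
  have hνσ := (sq_sqrt hν0.le).symm
  set σ := √(ν t)
  rw [hνσ]
  field_simp
  ring
end

section
/- Let I ⊆ ℝ be an open interval, β : ℝ → ℝ differentiable on I, and ν : ℝ → ℝ differentiable on I with 0 < ν(t) < 1 and ν'(t) = (1 − ν(t))·β(t) for t ∈ I. Fix x₀ ∈ ℝ and define the single-point score S(x,t) = (x − √(1 − ν(t))·x₀)/√(ν(t)), the reverse-SDE drift f♯(x,t) = −(β(t)/2)·x + (β(t)/√(ν(t)))·S(x,t), and the operator (L♯ φ)(x,t) = −∂φ/∂t (x,t) − f♯(x,t)·∂φ/∂x (x,t) + (β(t)/2)·∂²φ/∂x² (x,t). Then for all x ∈ ℝ and t ∈ I, (L♯(−f♯))(x,t) = ( β(t)²/4 − β'(t)/2 )·x + ( β'(t)/√(ν(t)) )·S(x,t). -/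
/-!
The drift is affine in space, `f♯(x,t) = a(t)·x + b(t)` with `a = β/ν − β/2` and
`b = −β·√(1−ν)·x₀/ν`, so `∂ₓf♯ = a`, `∂ₓ²f♯ = 0` and `L♯(−f♯) = a'·x + b' + a·f♯`.
Differentiating `a` and `b` with `ν' = (1−ν)β` and `(√(1−ν))' = −β·√(1−ν)/2`, the
`β²`-terms of the offset cancel and those of the slope collapse to `β²/4`.
-/

open Real

section AffineField

variable {a b : ℝ → ℝ} {a' b' t : ℝ}

lemma generator_neg_affine (ha : HasDerivAt a a' t) (hb : HasDerivAt b b' t) (D x : ℝ) :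
    -deriv (fun τ => -(a τ * x + b τ)) t
        - (a t * x + b t) * deriv (fun ξ => -(a t * ξ + b t)) x
        + D * deriv (deriv fun ξ => -(a t * ξ + b t)) x
      = a' * x + b' + a t * (a t * x + b t) := by
  have htime : HasDerivAt (fun τ => -(a τ * x + b τ)) (-(a' * x + b')) t :=
    ((ha.mul_const x).add hb).neg
  have hspace : (deriv fun ξ => -(a t * ξ + b t)) = fun _ => -a t := by
    ext ξ
    simp
  rw [htime.deriv, hspace, deriv_const]
  ring

end AffineField

section Schedule

variable {ν β : ℝ → ℝ} {ν' t : ℝ}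

lemma HasDerivAt.sqrt_sq (hν : HasDerivAt ν ν' t) (hpos : 0 < ν t) :
    HasDerivAt (fun τ => √(ν τ) ^ 2) ν' t := by
  have hs : √(ν t) ≠ 0 := (sqrt_pos.mpr hpos).ne'
  refine ((hν.sqrt hpos.ne').pow 2).congr_deriv ?_
  field_simp
  ring

lemma HasDerivAt.sqrt_one_sub_of_vp (hν : HasDerivAt ν ((1 - ν t) * β t) t) (hlt : ν t < 1) :
    HasDerivAt (fun τ => √(1 - ν τ)) (-(β t * √(1 - ν t) / 2)) t := by
  have hpos : 0 < 1 - ν t := sub_pos.mpr hlt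
  have hs : √(1 - ν t) ≠ 0 := (sqrt_pos.mpr hpos).ne'
  refine ((hν.const_sub 1).sqrt hpos.ne').congr_deriv ?_
  field_simp
  rw [sq_sqrt hpos.le]
  ring

end Schedule

-- `√ν ^ 2` rather than `ν`: the identity must hold for all `τ` near `t` to be rewritten under
-- the time derivative, and `√ν ^ 2 = ν` only where `ν ≥ 0`.
lemma vp_drift_eq_affine (β ν : ℝ → ℝ) (x₀ x τ : ℝ) :
    -(β τ / 2) * x + β τ / √(ν τ) * ((x - √(1 - ν τ) * x₀) / √(ν τ))
      = (β τ / √(ν τ) ^ 2 - β τ / 2) * x + -(β τ * √(1 - ν τ) * x₀ / √(ν τ) ^ 2) := by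
  ring

theorem ideal_derivative_L_sharp_of_drift_general
    (I : Set ℝ)
    (β ν : ℝ → ℝ)
    (hβ : ∀ t ∈ I, DifferentiableAt ℝ β t)
    (hν01 : ∀ t ∈ I, 0 < ν t ∧ ν t < 1)
    (hν : ∀ t ∈ I, HasDerivAt ν ((1 - ν t) * β t) t)
    (x₀ : ℝ)
    (S : ℝ → ℝ → ℝ)
    (hS : S = fun x t => (x - Real.sqrt (1 - ν t) * x₀) / Real.sqrt (ν t))
    (f : ℝ → ℝ → ℝ)
    (hf : f = fun x t => -(β t / 2) * x + (β t / Real.sqrt (ν t)) * S x t)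
    (L : (ℝ → ℝ → ℝ) → ℝ → ℝ → ℝ)
    (hL : L = fun φ x t =>
      -(deriv (fun τ => φ x τ) t) - f x t * deriv (fun ξ => φ ξ t) x
        + (β t / 2) * deriv (deriv (fun ξ => φ ξ t)) x) :
    ∀ x : ℝ, ∀ t ∈ I,
      L (fun x t => -f x t) x t
        = (β t ^ 2 / 4 - deriv β t / 2) * x
          + (deriv β t / Real.sqrt (ν t)) * S x t := by
  subst hS hf hL
  intro x t ht
  obtain ⟨hν0, hν1⟩ := hν01 t ht
  have hs2 : √(ν t) ^ 2 ≠ 0 := pow_ne_zero 2 (sqrt_pos.mpr hν0).ne'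
  have hβ' := (hβ t ht).hasDerivAt
  have hq := (hν t ht).sqrt_sq hν0
  have hc := (hν t ht).sqrt_one_sub_of_vp hν1
  have ha : HasDerivAt (fun τ => β τ / √(ν τ) ^ 2 - β τ / 2) _ t :=
    (hβ'.div hq hs2).sub (hβ'.div_const 2)
  have hb : HasDerivAt (fun τ => -(β τ * √(1 - ν τ) * x₀ / √(ν τ) ^ 2)) _ t :=
    (((hβ'.mul hc).mul_const x₀).div hq hs2).neg
  simp only [vp_drift_eq_affine]
  rw [generator_neg_affine ha hb, Pi.mul_apply, sq_sqrt hν0.le]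
  field_simp
  rw [sq_sqrt hν0.le]
  ring

theorem ideal_derivative_L_sharp_of_drift
    (I : Set ℝ) (hI : IsOpen I)
    (β ν : ℝ → ℝ)
    (hβ : ∀ t ∈ I, DifferentiableAt ℝ β t)
    (hν01 : ∀ t ∈ I, 0 < ν t ∧ ν t < 1)
    (hν : ∀ t ∈ I, HasDerivAt ν ((1 - ν t) * β t) t)
    (x₀ : ℝ)
    (S : ℝ → ℝ → ℝ)
    (hS : S = fun x t => (x - Real.sqrt (1 - ν t) * x₀) / Real.sqrt (ν t))
    (f : ℝ → ℝ → ℝ)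
    (hf : f = fun x t => -(β t / 2) * x + (β t / Real.sqrt (ν t)) * S x t)
    (L : (ℝ → ℝ → ℝ) → ℝ → ℝ → ℝ)
    (hL : L = fun φ x t =>
      -(deriv (fun τ => φ x τ) t) - f x t * deriv (fun ξ => φ ξ t) x
        + (β t / 2) * deriv (deriv (fun ξ => φ ξ t)) x) :
    ∀ x : ℝ, ∀ t ∈ I,
      L (fun x t => -f x t) x t
        = (β t ^ 2 / 4 - deriv β t / 2) * x
          + (deriv β t / Real.sqrt (ν t)) * S x t :=
  ideal_derivative_L_sharp_of_drift_general I β ν hβ hν01 hν x₀ S hS f hf L hL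
end

section
/- Let I ⊆ ℝ be an open interval, β : ℝ → ℝ differentiable on I, and ν : ℝ → ℝ differentiable on I with 0 < ν(t) < 1 and ν'(t) = (1 − ν(t))·β(t) for t ∈ I. Fix x₀ ∈ ℝ and define the single-point score S(x,t) = (x − √(1 − ν(t))·x₀)/√(ν(t)), the reverse-SDE drift f♯(x,t) = −(β(t)/2)·x + (β(t)/√(ν(t)))·S(x,t), and the operator (L♯ φ)(x,t) = −∂φ/∂t (x,t) − f♯(x,t)·∂φ/∂x (x,t) + (β(t)/2)·∂²φ/∂x² (x,t). Then for all x ∈ ℝ, t ∈ I and h ∈ ℝ, x + h·(−f♯)(x,t) + (h²/2)·(L♯(−f♯))(x,t) = ρ♯(t,h)·x + μ♯(t,h)·S(x,t)/√(ν(t)), where ρ♯(t,h) = 1 + β(t)h/2 + (h²/4)·(β(t)²/2 − β'(t)) and μ♯(t,h) = −β(t)h + β'(t)h²/2. -/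
open Real

/-!
Writing `u = S / √ν = (x - √(1 - ν) x₀) / ν`, the negated drift is `-f♯ = (β/2) x - β u`,
affine in `x` with slope `β/2 - β/ν`, so its second space derivative vanishes. The schedule
equation `ν' = (1 - ν) β` makes `∂ₜ u = β (x / (2ν) + u/2 - u/ν)` again linear in `(x, u)`,
and in `L♯(-f♯)` all terms carrying `1/ν` cancel, leaving `(β²/4 - β'/2) x + β' u`.
The update is then the second-order Taylor polynomial in `h`, read off in the basis `(x, u)`.
-/

noncomputable def scoreDivSqrt (ν : ℝ → ℝ) (x₀ x τ : ℝ) : ℝ :=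
  (x - √(1 - ν τ) * x₀) / ν τ

section VariancePreserving

variable {ν β : ℝ → ℝ} {x₀ t : ℝ}

theorem div_sqrt_div_sqrt_eq_scoreDivSqrt {x τ : ℝ} (hν : 0 ≤ ν τ) :
    (x - √(1 - ν τ) * x₀) / √(ν τ) / √(ν τ) = scoreDivSqrt ν x₀ x τ := by
  rw [div_div, mul_self_sqrt hν, scoreDivSqrt]

theorem hasDerivAt_scoreDivSqrt_space (ν : ℝ → ℝ) (x₀ τ x : ℝ) :
    HasDerivAt (fun ξ => scoreDivSqrt ν x₀ ξ τ) (ν τ)⁻¹ x := by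
  simpa [scoreDivSqrt, div_eq_mul_inv] using
    ((hasDerivAt_id x).sub_const (√(1 - ν τ) * x₀)).mul_const (ν τ)⁻¹

theorem hasDerivAt_sqrt_one_sub (hν : HasDerivAt ν ((1 - ν t) * β t) t) (h1 : ν t < 1) :
    HasDerivAt (fun τ => √(1 - ν τ)) (-(β t / 2) * √(1 - ν t)) t := by
  have hpos : 0 < 1 - ν t := by linarith
  refine ((hν.const_sub 1).sqrt hpos.ne').congr_deriv ?_
  have hsq : √(1 - ν t) * √(1 - ν t) = 1 - ν t := mul_self_sqrt hpos.le
  field_simp [(sqrt_pos.mpr hpos).ne']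
  linear_combination β t * hsq

theorem hasDerivAt_scoreDivSqrt_time (x : ℝ) (hν : HasDerivAt ν ((1 - ν t) * β t) t)
    (h0 : 0 < ν t) (h1 : ν t < 1) :
    HasDerivAt (fun τ => scoreDivSqrt ν x₀ x τ)
      (β t * (x / (2 * ν t) + scoreDivSqrt ν x₀ x t / 2 - scoreDivSqrt ν x₀ x t / ν t)) t := by
  refine ((((hasDerivAt_sqrt_one_sub hν h1).mul_const x₀).const_sub x).div hν
    h0.ne').congr_deriv ?_
  simp only [scoreDivSqrt]
  field_simp
  ring

end VariancePreserving

theorem quasi_ito_taylor_drift_update_general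
    (I : Set ℝ)
    (β ν : ℝ → ℝ)
    (hβ : ∀ t ∈ I, DifferentiableAt ℝ β t)
    (hν01 : ∀ t ∈ I, 0 < ν t ∧ ν t < 1)
    (hν : ∀ t ∈ I, HasDerivAt ν ((1 - ν t) * β t) t)
    (x₀ : ℝ)
    (S : ℝ → ℝ → ℝ)
    (hS : S = fun x t => (x - Real.sqrt (1 - ν t) * x₀) / Real.sqrt (ν t))
    (f : ℝ → ℝ → ℝ)
    (hf : f = fun x t => -(β t / 2) * x + (β t / Real.sqrt (ν t)) * S x t)
    (L : (ℝ → ℝ → ℝ) → ℝ → ℝ → ℝ)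
    (hL : L = fun φ x t =>
      -(deriv (fun τ => φ x τ) t) - f x t * deriv (fun ξ => φ ξ t) x
        + (β t / 2) * deriv (deriv (fun ξ => φ ξ t)) x)
    (ρ μ : ℝ → ℝ → ℝ)
    (hρ : ρ = fun t h => 1 + β t * h / 2 + (h ^ 2 / 4) * (β t ^ 2 / 2 - deriv β t))
    (hμ : μ = fun t h => -(β t * h) + deriv β t * h ^ 2 / 2) :
    ∀ x : ℝ, ∀ t ∈ I, ∀ h : ℝ,
      x + h * (-f x t) + (h ^ 2 / 2) * L (fun x t => -f x t) x t
        = ρ t h * x + μ t h * S x t / Real.sqrt (ν t) := by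
  intro x t ht h
  obtain ⟨h0, h1⟩ := hν01 t ht
  set u := scoreDivSqrt ν x₀
  have hS_div : ∀ ξ τ, 0 < ν τ → S ξ τ / √(ν τ) = u ξ τ := fun ξ τ hτ => by
    rw [hS, div_sqrt_div_sqrt_eq_scoreDivSqrt hτ.le]
  have hnegf : ∀ ξ τ, 0 < ν τ → -f ξ τ = β τ / 2 * ξ - β τ * u ξ τ := fun ξ τ hτ => by
    rw [← hS_div ξ τ hτ, hf]
    ring
  have hspace : deriv (fun ξ => -f ξ t) = fun _ => β t / 2 - β t / ν t := by
    funext ξ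
    refine HasDerivAt.deriv ?_
    convert ((hasDerivAt_id ξ).const_mul (β t / 2)).sub
      ((hasDerivAt_scoreDivSqrt_space ν x₀ t ξ).const_mul (β t)) using 1
    · exact funext fun ξ => hnegf ξ t h0
    · ring
  have htime : HasDerivAt (fun τ => -f x τ)
      (deriv β t / 2 * x - (deriv β t * u x t
        + β t * (β t * (x / (2 * ν t) + u x t / 2 - u x t / ν t)))) t := by
    have hβ' := (hβ t ht).hasDerivAt
    refine ((hβ'.div_const 2).mul_const x |>.sub
      (hβ'.mul (hasDerivAt_scoreDivSqrt_time x (hν t ht) h0 h1))).congr_of_eventuallyEq ?_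
    filter_upwards [(hν t ht).continuousAt.eventually (lt_mem_nhds h0)] with τ hτ
    exact hnegf x τ hτ
  simp only [hL, hρ, hμ, htime.deriv, hspace, deriv_const, mul_div_assoc, hS_div x t h0]
  linear_combination (h + h ^ 2 / 2 * (β t / 2 - β t / ν t)) * hnegf x t h0

theorem quasi_ito_taylor_drift_update
    (I : Set ℝ) (hI : IsOpen I)
    (β ν : ℝ → ℝ)
    (hβ : ∀ t ∈ I, DifferentiableAt ℝ β t)
    (hν01 : ∀ t ∈ I, 0 < ν t ∧ ν t < 1)
    (hν : ∀ t ∈ I, HasDerivAt ν ((1 - ν t) * β t) t)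
    (x₀ : ℝ)
    (S : ℝ → ℝ → ℝ)
    (hS : S = fun x t => (x - Real.sqrt (1 - ν t) * x₀) / Real.sqrt (ν t))
    (f : ℝ → ℝ → ℝ)
    (hf : f = fun x t => -(β t / 2) * x + (β t / Real.sqrt (ν t)) * S x t)
    (L : (ℝ → ℝ → ℝ) → ℝ → ℝ → ℝ)
    (hL : L = fun φ x t =>
      -(deriv (fun τ => φ x τ) t) - f x t * deriv (fun ξ => φ ξ t) x
        + (β t / 2) * deriv (deriv (fun ξ => φ ξ t)) x)
    (ρ μ : ℝ → ℝ → ℝ)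
    (hρ : ρ = fun t h => 1 + β t * h / 2 + (h ^ 2 / 4) * (β t ^ 2 / 2 - deriv β t))
    (hμ : μ = fun t h => -(β t * h) + deriv β t * h ^ 2 / 2) :
    ∀ x : ℝ, ∀ t ∈ I, ∀ h : ℝ,
      x + h * (-f x t) + (h ^ 2 / 2) * L (fun x t => -f x t) x t
        = ρ t h * x + μ t h * S x t / Real.sqrt (ν t) :=
  quasi_ito_taylor_drift_update_general I β ν hβ hν01 hν x₀ S hS f hf L hL ρ μ hρ hμ
end

section
/- Let β : ℝ → ℝ be twice continuously differentiable and ν : ℝ → ℝ differentiable with 0 < ν(t) < 1 and ν'(t) = (1 − ν(t))·β(t) for all t. Fix t ∈ ℝ. Then, as h → 0, √( (1 − ν(t−h)) / (1 − ν(t)) ) − [ 1 + β(t)h/2 + (h²/4)·(β(t)²/2 − β'(t)) + (h³/4)·(β(t)³/12 − β(t)β'(t)/2 + β''(t)/3) ] = o(h³). -/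
open Real Filter Asymptotics Topology

/-!
The ratio `g h = (1 - ν (t - h)) / (1 - ν t)` solves `g' = g · β (t - h)`, so `F = √g` solves
`F' = F · a` with `a h = β (t - h) / 2` and `F 0 = 1`. Differentiating this linear equation twice
gives `F'' = F (a² + a')` and `F''' = F (a³ + 3 a a' + a'')`, and the bracket in the statement
is exactly the Taylor polynomial `∑ F⁽ᵏ⁾(0) hᵏ / k!` of order three. Peano's remainder needs
`F'''` only at `0`, i.e. `β''` only at `t`.
-/

theorem isLittleO_sub_pow_succ_of_hasDerivAt {E : Type*} [NormedAddCommGroup E] [NormedSpace ℝ E]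
    {f f' : ℝ → E} {x₀ : ℝ} {n : ℕ} (hf : ∀ x, HasDerivAt f (f' x) x)
    (hf' : f' =o[𝓝 x₀] fun x => (x - x₀) ^ n) :
    (fun x => f x - f x₀) =o[𝓝 x₀] fun x => (x - x₀) ^ (n + 1) := by
  simpa using convex_univ.isLittleO_pow_succ_real (Set.mem_univ x₀)
    (fun x _ => (hf x).hasDerivWithinAt) (by simpa using hf')

theorem isLittleO_taylor_three_of_hasDerivAt {f f₁ f₂ : ℝ → ℝ} {x₀ c : ℝ}
    (hf : ∀ x, HasDerivAt f (f₁ x) x) (hf₁ : ∀ x, HasDerivAt f₁ (f₂ x) x)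
    (hf₂ : HasDerivAt f₂ c x₀) :
    (fun x => f x - (f x₀ + f₁ x₀ * (x - x₀) + f₂ x₀ / 2 * (x - x₀) ^ 2
      + c / 6 * (x - x₀) ^ 3)) =o[𝓝 x₀] fun x => (x - x₀) ^ 3 := by
  have hy : ∀ x, HasDerivAt (fun y : ℝ => y - x₀) 1 x := fun x => (hasDerivAt_id x).sub_const x₀
  have hp₂ : ∀ x, HasDerivAt (fun x => f₁ x₀ + f₂ x₀ * (x - x₀) + c / 2 * (x - x₀) ^ 2)
      (f₂ x₀ + c * (x - x₀)) x := fun x => by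
    refine ((((hy x).const_mul _).const_add _).add (((hy x).pow 2).const_mul _)).congr_deriv ?_
    ring
  have hp₃ : ∀ x, HasDerivAt
      (fun x => f x₀ + f₁ x₀ * (x - x₀) + f₂ x₀ / 2 * (x - x₀) ^ 2 + c / 6 * (x - x₀) ^ 3)
      (f₁ x₀ + f₂ x₀ * (x - x₀) + c / 2 * (x - x₀) ^ 2) x := fun x => by
    refine (((((hy x).const_mul _).const_add _).add (((hy x).pow 2).const_mul _)).add
      (((hy x).pow 3).const_mul _)).congr_deriv ?_
    push_cast
    ring
  have e₂ : (fun x => f₂ x - (f₂ x₀ + c * (x - x₀))) =o[𝓝 x₀] fun x => (x - x₀) ^ 1 := by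
    simpa only [pow_one, smul_eq_mul, mul_comm, sub_sub] using hasDerivAt_iff_isLittleO.mp hf₂
  have e₁ := isLittleO_sub_pow_succ_of_hasDerivAt (fun x => (hf₁ x).sub (hp₂ x)) e₂
  have e₀ := isLittleO_sub_pow_succ_of_hasDerivAt (fun x => (hf x).sub (hp₃ x)) (by simpa using e₁)
  simpa using e₀

theorem isLittleO_taylor_three_of_hasDerivAt_eq_mul {f a a₁ : ℝ → ℝ} {x₀ a₂ : ℝ}
    (hf : ∀ x, HasDerivAt f (f x * a x) x) (ha : ∀ x, HasDerivAt a (a₁ x) x)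
    (ha₁ : HasDerivAt a₁ a₂ x₀) :
    (fun x => f x - f x₀ * (1 + a x₀ * (x - x₀) + (a x₀ ^ 2 + a₁ x₀) / 2 * (x - x₀) ^ 2
      + (a x₀ ^ 3 + 3 * a x₀ * a₁ x₀ + a₂) / 6 * (x - x₀) ^ 3)) =o[𝓝 x₀]
      fun x => (x - x₀) ^ 3 := by
  have hf₁ : ∀ x, HasDerivAt (fun x => f x * a x) (f x * (a x ^ 2 + a₁ x)) x := fun x => by
    refine ((hf x).mul (ha x)).congr_deriv ?_
    ring
  have hf₂ : HasDerivAt (fun x => f x * (a x ^ 2 + a₁ x))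
      (f x₀ * (a x₀ ^ 3 + 3 * a x₀ * a₁ x₀ + a₂)) x₀ := by
    refine ((hf x₀).mul (((ha x₀).fun_pow 2).fun_add ha₁)).congr_deriv ?_
    push_cast
    ring
  refine (isLittleO_taylor_three_of_hasDerivAt hf hf₁ hf₂).congr_left fun x => ?_
  ring

theorem hasDerivAt_sqrt_of_hasDerivAt_eq_mul {g : ℝ → ℝ} {a x : ℝ}
    (hg : HasDerivAt g (g x * a) x) (hx : 0 < g x) :
    HasDerivAt (fun y => √(g y)) (√(g x) * (a / 2)) x := by
  refine (hg.sqrt hx.ne').congr_deriv ?_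
  have hs : √(g x) ≠ 0 := (sqrt_pos.mpr hx).ne'
  nth_rw 1 [← mul_self_sqrt hx.le]
  field_simp

theorem ddim_x_coefficient_third_order
    (β ν : ℝ → ℝ)
    (hβ : ContDiff ℝ 2 β)
    (hν01 : ∀ t, 0 < ν t ∧ ν t < 1)
    (hν : ∀ t, HasDerivAt ν ((1 - ν t) * β t) t)
    (t : ℝ) :
    (fun h : ℝ =>
        Real.sqrt ((1 - ν (t - h)) / (1 - ν t))
          - (1 + β t * h / 2
              + (h ^ 2 / 4) * (β t ^ 2 / 2 - deriv β t)
              + (h ^ 3 / 4) * (β t ^ 3 / 12 - β t * deriv β t / 2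
                  + deriv (deriv β) t / 3)))
      =o[𝓝 0] fun h : ℝ => h ^ 3 := by
  have hβ₁ : Differentiable ℝ β := hβ.differentiable two_ne_zero
  have hβ₂ : Differentiable ℝ (deriv β) := hβ.differentiable_deriv_two
  have hrev : ∀ h : ℝ, HasDerivAt (fun x : ℝ => t - x) (-1) h := fun h => by
    simpa using (hasDerivAt_id h).const_sub t
  have hpos : ∀ s, 0 < 1 - ν s := fun s => sub_pos.mpr (hν01 s).2
  have hratio : ∀ h, HasDerivAt (fun h => (1 - ν (t - h)) / (1 - ν t))
      ((1 - ν (t - h)) / (1 - ν t) * β (t - h)) h := fun h => by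
    refine ((((hν (t - h)).comp h (hrev h)).const_sub 1).div_const _).congr_deriv ?_
    ring
  have hsqrt : ∀ h, HasDerivAt (fun h => √((1 - ν (t - h)) / (1 - ν t)))
      (√((1 - ν (t - h)) / (1 - ν t)) * (β (t - h) / 2)) h := fun h =>
    hasDerivAt_sqrt_of_hasDerivAt_eq_mul (hratio h) (div_pos (hpos _) (hpos t))
  have ha : ∀ h, HasDerivAt (fun h => β (t - h) / 2) (-deriv β (t - h) / 2) h := fun h => by
    simpa using (((hβ₁ (t - h)).hasDerivAt.comp h (hrev h)).div_const 2)
  have ha₁ : HasDerivAt (fun h => -deriv β (t - h) / 2) (deriv (deriv β) t / 2) 0 := by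
    simpa using (((hβ₂ (t - 0)).hasDerivAt.comp 0 (hrev 0)).neg.div_const 2)
  refine (isLittleO_taylor_three_of_hasDerivAt_eq_mul hsqrt ha ha₁).congr' ?_
    (by simp)
  filter_upwards with h
  simp only [sub_zero, div_self (hpos t).ne', sqrt_one]
  ring
end

section
/- Let β : ℝ → ℝ be twice continuously differentiable and ν : ℝ → ℝ differentiable with 0 < ν(t) < 1 and ν'(t) = (1 − ν(t))·β(t) for all t. Fix t ∈ ℝ. Then, as h → 0, √(ν(t)) · ( √((1 − ν(t))·ν(t−h)) − √((1 − ν(t−h))·ν(t)) ) / √(1 − ν(t)) − [ −β(t)h/2 + (h²/4)·(β'(t) − β(t)²/(2ν(t))) + (h³/4)·( β(t)³·(−ν(t)² + 3ν(t) − 3)/(12ν(t)²) + β(t)β'(t)/(2ν(t)) − β''(t)/3 ) ] = o(h³). -/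
/-!
Write `a = ν t`. Since `√((1 - a) w) - √((1 - w) a)` splits into square roots, the quantity is
`φ (ν (t - h))` with `φ y = √a √y - a / √(1 - a) · √(1 - y)`, so it suffices to expand `φ ∘ ν` to
third order at `t` (Peano form of Taylor's theorem) and evaluate at `t - h`. The derivatives of
`φ ∘ ν` come from the third-order chain rule; those of `ν` follow from `ν' = (1 - ν) β`, which
gives `((1 - ν) γ)' = (1 - ν) (γ' - β γ)`, and those of `φ` from `(y ^ (1/2 - n))' =
(1/2 - n) y ^ (1/2 - (n + 1))`. Matching coefficients is then a rational identity in `a` and the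
derivatives of `β` at `t`, once `√a ^ 2 = a`.
-/

open Real Filter Asymptotics Topology

theorem isLittleO_pow_succ_of_hasDerivAt {f f' : ℝ → ℝ} {x₀ : ℝ} {n : ℕ}
    (hf : ∀ x, HasDerivAt f (f' x) x) (hf' : f' =o[𝓝 x₀] fun x => (x - x₀) ^ n) :
    (fun x => f x - f x₀) =o[𝓝 x₀] fun x => (x - x₀) ^ (n + 1) := by
  simpa using Convex.isLittleO_pow_succ_real convex_univ (Set.mem_univ x₀)
    (fun x _ => (hf x).hasDerivWithinAt) (by simpa using hf')

theorem hasDerivAt_cubic (A B C D x₀ x : ℝ) :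
    HasDerivAt (fun x => A + B * (x - x₀) + C * (x - x₀) ^ 2 + D * (x - x₀) ^ 3)
      (B + 2 * C * (x - x₀) + 3 * D * (x - x₀) ^ 2) x := by
  have hX : HasDerivAt (fun x => x - x₀) 1 x := (hasDerivAt_id x).sub_const x₀
  refine ((((hX.const_mul B).const_add A).add ((hX.pow 2).const_mul C)).add
    ((hX.pow 3).const_mul D)).congr_deriv ?_
  simp only [Nat.add_one_sub_one, Nat.cast_ofNat]
  ring

theorem taylor_three_isLittleO_of_hasDerivAt {f f₁ f₂ : ℝ → ℝ} {x₀ f₃ : ℝ}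
    (hf : ∀ x, HasDerivAt f (f₁ x) x) (hf₁ : ∀ x, HasDerivAt f₁ (f₂ x) x)
    (hf₂ : HasDerivAt f₂ f₃ x₀) :
    (fun x => f x - (f x₀ + f₁ x₀ * (x - x₀) + f₂ x₀ / 2 * (x - x₀) ^ 2
      + f₃ / 6 * (x - x₀) ^ 3)) =o[𝓝 x₀] fun x => (x - x₀) ^ 3 := by
  have o₂ : (fun x => f₂ x - (f₂ x₀ + f₃ * (x - x₀))) =o[𝓝 x₀] fun x => (x - x₀) ^ 1 := by
    simpa [sub_sub, mul_comm] using hf₂.isLittleO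
  have o₁ : (fun x => f₁ x - (f₁ x₀ + f₂ x₀ * (x - x₀) + f₃ / 2 * (x - x₀) ^ 2
      + 0 * (x - x₀) ^ 3)) =o[𝓝 x₀] fun x => (x - x₀) ^ 2 := by
    simpa using isLittleO_pow_succ_of_hasDerivAt (fun x => ((hf₁ x).sub
      (hasDerivAt_cubic (f₁ x₀) (f₂ x₀) (f₃ / 2) 0 x₀ x)).congr_deriv (by ring)) o₂
  simpa using isLittleO_pow_succ_of_hasDerivAt (fun x => ((hf x).sub
    (hasDerivAt_cubic (f x₀) (f₁ x₀) (f₂ x₀ / 2) (f₃ / 6) x₀ x)).congr_deriv (by ring)) o₁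

theorem taylor_three_comp_isLittleO_of_hasDerivAt {φ φ₁ φ₂ g g₁ g₂ : ℝ → ℝ} {x₀ φ₃ g₃ : ℝ}
    (hφ : ∀ x, HasDerivAt φ (φ₁ (g x)) (g x)) (hφ₁ : ∀ x, HasDerivAt φ₁ (φ₂ (g x)) (g x))
    (hφ₂ : HasDerivAt φ₂ φ₃ (g x₀)) (hg : ∀ x, HasDerivAt g (g₁ x) x)
    (hg₁ : ∀ x, HasDerivAt g₁ (g₂ x) x) (hg₂ : HasDerivAt g₂ g₃ x₀) :
    (fun x => φ (g x) - (φ (g x₀) + φ₁ (g x₀) * g₁ x₀ * (x - x₀)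
      + (φ₂ (g x₀) * g₁ x₀ ^ 2 + φ₁ (g x₀) * g₂ x₀) / 2 * (x - x₀) ^ 2
      + (φ₃ * g₁ x₀ ^ 3 + 3 * φ₂ (g x₀) * g₁ x₀ * g₂ x₀ + φ₁ (g x₀) * g₃) / 6 * (x - x₀) ^ 3))
      =o[𝓝 x₀] fun x => (x - x₀) ^ 3 := by
  have hd₂ : HasDerivAt (fun x => φ₂ (g x) * g₁ x ^ 2 + φ₁ (g x) * g₂ x)
      (φ₃ * g₁ x₀ ^ 3 + 3 * φ₂ (g x₀) * g₁ x₀ * g₂ x₀ + φ₁ (g x₀) * g₃) x₀ :=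
    (((hφ₂.comp x₀ (hg x₀)).mul ((hg₁ x₀).pow 2)).add
      (((hφ₁ x₀).comp x₀ (hg x₀)).mul hg₂)).congr_deriv
      (by simp only [Nat.add_one_sub_one, Nat.cast_ofNat, Pi.pow_apply, Function.comp_apply]; ring)
  exact taylor_three_isLittleO_of_hasDerivAt (f₁ := fun x => φ₁ (g x) * g₁ x)
    (f₂ := fun x => φ₂ (g x) * g₁ x ^ 2 + φ₁ (g x) * g₂ x)
    (fun x => (hφ x).comp x (hg x))
    (fun x => (((hφ₁ x).comp x (hg x)).mul (hg₁ x)).congr_deriv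
      (by simp only [Function.comp_apply]; ring)) hd₂

theorem sqrt_div_pow_eq_rpow {y : ℝ} (hy : 0 < y) (n : ℕ) :
    √y / y ^ n = y ^ ((1 / 2 : ℝ) - n) := by
  rw [Real.rpow_sub hy, Real.rpow_natCast, Real.sqrt_eq_rpow]

theorem hasDerivAt_sqrt_div_pow (n : ℕ) {y : ℝ} (hy : 0 < y) :
    HasDerivAt (fun y => √y / y ^ n) ((1 / 2 - n) * (√y / y ^ (n + 1))) y := by
  have h := Real.hasDerivAt_rpow_const (x := y) (p := 1 / 2 - n) (Or.inl hy.ne')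
  rw [show (1 / 2 - n : ℝ) - 1 = 1 / 2 - ((n + 1 : ℕ) : ℝ) by push_cast; ring,
    ← sqrt_div_pow_eq_rpow hy] at h
  exact h.congr_of_eventuallyEq
    (eventually_gt_nhds hy |>.mono fun z hz => sqrt_div_pow_eq_rpow hz n)

/-- `y ↦ u y ^ (1/2 - n) + v (1 - y) ^ (1/2 - n)` on `(0, 1)`: the family closed under
differentiation that contains `√a √y - a / √(1 - a) · √(1 - y)`. -/
noncomputable def sqrtDivPowSum (u v : ℝ) (n : ℕ) (y : ℝ) : ℝ :=
  u * (√y / y ^ n) + v * (√(1 - y) / (1 - y) ^ n)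

theorem hasDerivAt_sqrtDivPowSum (u v : ℝ) (n : ℕ) {y : ℝ} (hy₀ : 0 < y) (hy₁ : y < 1) :
    HasDerivAt (sqrtDivPowSum u v n)
      (sqrtDivPowSum ((1 / 2 - n) * u) (-((1 / 2 - n) * v)) (n + 1) y) y := by
  have h₁ := (hasDerivAt_sqrt_div_pow n (sub_pos.2 hy₁)).comp y
    ((hasDerivAt_id y).const_sub 1)
  refine (((hasDerivAt_sqrt_div_pow n hy₀).const_mul u).add (h₁.const_mul v)).congr_deriv ?_
  simp only [sqrtDivPowSum]
  ring

theorem hasDerivAt_one_sub_mul_of_hasDerivAt {ν β γ : ℝ → ℝ} {γ' s : ℝ}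
    (hν : HasDerivAt ν ((1 - ν s) * β s) s) (hγ : HasDerivAt γ γ' s) :
    HasDerivAt (fun s => (1 - ν s) * γ s) ((1 - ν s) * (γ' - β s * γ s)) s :=
  ((hν.const_sub 1).mul hγ).congr_deriv (by ring)

theorem sqrt_mul_sub_sqrt_mul_div {a w : ℝ} (ha₀ : 0 ≤ a) (ha₁ : a < 1) :
    √a * (√((1 - a) * w) - √((1 - w) * a)) / √(1 - a)
      = √a * √w - a / √(1 - a) * √(1 - w) := by
  have he : 0 < √(1 - a) := Real.sqrt_pos.2 (sub_pos.2 ha₁)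
  rw [Real.sqrt_mul (sub_pos.2 ha₁).le, Real.sqrt_mul' _ ha₀]
  field_simp
  linear_combination (-√(1 - w)) * Real.mul_self_sqrt ha₀

theorem ddim_score_coefficient_third_order
    (β ν : ℝ → ℝ)
    (hβ : ContDiff ℝ 2 β)
    (hν01 : ∀ t, 0 < ν t ∧ ν t < 1)
    (hν : ∀ t, HasDerivAt ν ((1 - ν t) * β t) t)
    (t : ℝ) :
    (fun h : ℝ =>
        Real.sqrt (ν t) *
            (Real.sqrt ((1 - ν t) * ν (t - h)) - Real.sqrt ((1 - ν (t - h)) * ν t))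
            / Real.sqrt (1 - ν t)
          - (-(β t * h / 2)
              + (h ^ 2 / 4) * (deriv β t - β t ^ 2 / (2 * ν t))
              + (h ^ 3 / 4) * (β t ^ 3 * (-(ν t ^ 2) + 3 * ν t - 3) / (12 * ν t ^ 2)
                  + β t * deriv β t / (2 * ν t) - deriv (deriv β) t / 3)))
      =o[𝓝 0] fun h : ℝ => h ^ 3 := by
  have hβ₁ : ∀ s, HasDerivAt β (deriv β s) s := fun s =>
    (hβ.differentiable two_ne_zero s).hasDerivAt
  have hβ₂ : HasDerivAt (deriv β) (deriv (deriv β) t) t :=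
    (hβ.differentiable_deriv_two t).hasDerivAt
  have expansion := taylor_three_comp_isLittleO_of_hasDerivAt
    (fun s => hasDerivAt_sqrtDivPowSum (√(ν t)) (-(ν t / √(1 - ν t))) 0 (hν01 s).1 (hν01 s).2)
    (fun s => hasDerivAt_sqrtDivPowSum _ _ _ (hν01 s).1 (hν01 s).2)
    (hasDerivAt_sqrtDivPowSum _ _ _ (hν01 t).1 (hν01 t).2) hν
    (fun s => hasDerivAt_one_sub_mul_of_hasDerivAt (hν s) (hβ₁ s))
    (hasDerivAt_one_sub_mul_of_hasDerivAt (hν t) (hβ₂.sub ((hβ₁ t).mul (hβ₁ t))))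
  have hk : Tendsto (fun h : ℝ => t - h) (𝓝 0) (𝓝 t) :=
    (continuous_sub_left t).tendsto' 0 t (sub_zero t)
  refine (expansion.comp_tendsto hk).neg_right.congr' (Eventually.of_forall fun h => ?_)
    (Eventually.of_forall fun h => by simp only [Function.comp_apply]; ring)
  obtain ⟨ha₀, ha₁⟩ := hν01 t
  have hc : √(ν t) ^ 2 = ν t := Real.sq_sqrt ha₀.le
  have he : 0 < √(1 - ν t) := Real.sqrt_pos.2 (sub_pos.2 ha₁)
  have ha₁' : 0 < 1 - ν t := sub_pos.2 ha₁
  simp only [Function.comp_apply, sqrtDivPowSum]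
  rw [sqrt_mul_sub_sqrt_mul_div ha₀.le ha₁]
  push_cast
  field_simp
  rw [hc]
  ring
end
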